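/- There is no constant bound of 3.25 on covering ratios of solvable grid distributions: for every ε > 0 there exists n and a solvable pebble distribution D on G_{n×n} with n²/|D| > 3.5 − ε; in particular the covering ratio can exceed 3.25. -/

import Mathlib

/-- A pebbling move: remove two pebbles from `u`, add one pebble at a neighbour `v`. -/
def PebblingMove {V : Type*} [DecidableEq V] (G : SimpleGraph V) (D D' : V → ℕ) : Prop :=
  ∃ u v, G.Adj u v ∧ 2 ≤ D u ∧
    D' = Function.update (Function.update D u (D u - 2)) v (D v + 1)

/-- `t` is reachable under `D`: some sequence of pebbling moves puts a pebble on `t`. -/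
def PebbleReachable {V : Type*} [DecidableEq V] (G : SimpleGraph V) (D : V → ℕ) (t : V) : Prop :=
  ∃ D', Relation.ReflTransGen (PebblingMove G) D D' ∧ 1 ≤ D' t

/-- `D` is solvable if every vertex is reachable under it. -/
def SolvableDistr {V : Type*} [DecidableEq V] (G : SimpleGraph V) (D : V → ℕ) : Prop :=
  ∀ t, PebbleReachable G D t

/-- The `r × c` grid graph. -/
def fgrid (r c : ℕ) : SimpleGraph (Fin r × Fin c) where
  Adj p q := ((p.1 : ℤ) - q.1).natAbs + ((p.2 : ℤ) - q.2).natAbs = 1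
  symm := ⟨by intro p q h; omega⟩
  loopless := ⟨by intro p h; simp at h⟩

/-!
The points with `6x + y ≡ 0 (mod 14)` form a lattice of index 14, so 4 pebbles on each of them
cost 2/7 pebble per vertex, i.e. covering ratio 7/2. According to the residue of `6x + y`, every
vertex is either within distance 2 of a lattice point, which can send it one pebble, or (residues
3, 4, 10, 11) adjacent to a vertex at distance 2 from two lattice points, which together deliver
the two pebbles paying for the last move. Near the boundary lattice points may be missing, so a
frame of width 3 gets 2 pebbles per vertex; it costs `O(n)` pebbles, and on the `14M × 14M` grid
the ratio is at least `7M / (2(M + 6))`, which tends to 7/2.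
-/

open Finset Relation

section Pebbling

variable {V : Type*} [DecidableEq V] {G : SimpleGraph V}

theorem PebblingMove.add_right {D D' : V → ℕ} (h : PebblingMove G D D') (C : V → ℕ) :
    PebblingMove G (D + C) (D' + C) := by
  obtain ⟨u, v, hadj, hu, rfl⟩ := h
  refine ⟨u, v, hadj, le_add_right hu, funext fun w => ?_⟩
  simp only [Function.update_apply, Pi.add_apply]
  split_ifs <;> subst_vars <;> omega

theorem reflTransGen_pebblingMove_add_right {D D' : V → ℕ}
    (h : ReflTransGen (PebblingMove G) D D') (C : V → ℕ) :
    ReflTransGen (PebblingMove G) (D + C) (D' + C) :=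
  h.lift (· + C) fun _ _ hmove => hmove.add_right C

def CanPebble (G : SimpleGraph V) (D : V → ℕ) (k : ℕ) (t : V) : Prop :=
  ∃ D', ReflTransGen (PebblingMove G) D D' ∧ k ≤ D' t

namespace CanPebble

variable {D D₁ D₂ E : V → ℕ} {k k₁ k₂ : ℕ} {u t : V}

theorem of_le (h : k ≤ D t) : CanPebble G D k t := ⟨D, .refl, h⟩

theorem of_reflTransGen (hDE : ReflTransGen (PebblingMove G) D E) (h : CanPebble G E k t) :
    CanPebble G D k t :=
  let ⟨E', hEE', hk⟩ := h
  ⟨E', hDE.trans hEE', hk⟩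

theorem anti (hk : k₁ ≤ k₂) (h : CanPebble G D k₂ t) : CanPebble G D k₁ t :=
  let ⟨E, hDE, hk₂⟩ := h
  ⟨E, hDE, hk.trans hk₂⟩

theorem add (h₁ : CanPebble G D₁ k₁ t) (h₂ : CanPebble G D₂ k₂ t) :
    CanPebble G (D₁ + D₂) (k₁ + k₂) t := by
  obtain ⟨E₁, hDE₁, hk₁⟩ := h₁
  obtain ⟨E₂, hDE₂, hk₂⟩ := h₂
  refine ⟨E₁ + E₂, (reflTransGen_pebblingMove_add_right hDE₁ D₂).trans ?_, add_le_add hk₁ hk₂⟩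
  simpa only [add_comm E₁] using reflTransGen_pebblingMove_add_right hDE₂ E₁

theorem mono (hD : D₁ ≤ D₂) (h : CanPebble G D₁ k t) : CanPebble G D₂ k t := by
  simpa only [add_tsub_cancel_of_le hD, add_zero] using h.add (of_le (D := D₂ - D₁) (Nat.zero_le _))

theorem add_of_adj (hadj : G.Adj u t) {j : ℕ} (hj : 2 * j ≤ D u) : CanPebble G D (D t + j) t := by
  induction j generalizing D with
  | zero => exact of_le le_rfl
  | succ j ih =>
    set D' := Function.update (Function.update D u (D u - 2)) t (D t + 1)
    have hmove : PebblingMove G D D' := ⟨u, t, hadj, by omega, rfl⟩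
    have hD'u : D' u = D u - 2 := by simp [D', hadj.ne]
    have hD't : D' t = D t + 1 := by simp [D']
    have := ih (D := D') (by omega)
    rw [hD't, add_assoc, add_comm 1] at this
    exact of_reflTransGen (.single hmove) this

theorem of_adj (hadj : G.Adj u t) (h : CanPebble G D (2 * k) u) : CanPebble G D k t := by
  obtain ⟨E, hDE, hk⟩ := h
  exact of_reflTransGen hDE ((add_of_adj hadj hk).anti (Nat.le_add_left k _))

end CanPebble

end Pebbling

section Grid

variable {r c : ℕ}

def gridDist (p q : Fin r × Fin c) : ℕ :=
  ((p.1 : ℤ) - q.1).natAbs + ((p.2 : ℤ) - q.2).natAbs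

theorem exists_fgrid_adj_gridDist_lt {p q : Fin r × Fin c} (h : p ≠ q) :
    ∃ p', (fgrid r c).Adj p p' ∧ gridDist p' q < gridDist p q := by
  obtain ⟨⟨x, hx⟩, ⟨y, hy⟩⟩ := p
  obtain ⟨⟨x', hx'⟩, ⟨y', hy'⟩⟩ := q
  simp only [ne_eq, Prod.mk.injEq, Fin.mk.injEq] at h
  simp only [gridDist, fgrid]
  rcases lt_trichotomy x x' with hlt | rfl | hgt
  · exact ⟨(⟨x + 1, by omega⟩, ⟨y, hy⟩), by simp only; omega⟩
  · rcases lt_trichotomy y y' with hlt | rfl | hgt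
    · exact ⟨(⟨x, hx⟩, ⟨y + 1, by omega⟩), by simp only; omega⟩
    · omega
    · exact ⟨(⟨x, hx⟩, ⟨y - 1, by omega⟩), by simp only; omega⟩
  · exact ⟨(⟨x - 1, by omega⟩, ⟨y, hy⟩), by simp only; omega⟩

variable {D : Fin r × Fin c → ℕ}

theorem CanPebble.of_gridDist_le {p t : Fin r × Fin c} {d k : ℕ} (hd : gridDist p t ≤ d)
    (h : CanPebble (fgrid r c) D (2 ^ d * k) p) : CanPebble (fgrid r c) D k t := by
  induction d generalizing p with
  | zero =>
    obtain rfl : p = t := by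
      by_contra hne
      obtain ⟨_, _, hlt⟩ := exists_fgrid_adj_gridDist_lt hne
      omega
    simpa using h
  | succ d ih =>
    by_cases hpt : p = t
    · subst hpt
      exact h.anti (Nat.le_mul_of_pos_left k (by positivity))
    · obtain ⟨p', hadj, hlt⟩ := exists_fgrid_adj_gridDist_lt hpt
      rw [pow_succ', mul_assoc] at h
      exact ih (by omega) (h.of_adj hadj)

theorem pebbleReachable_of_gridDist_le_two {p t : Fin r × Fin c} (hp : 4 ≤ D p)
    (hd : gridDist p t ≤ 2) : PebbleReachable (fgrid r c) D t :=
  CanPebble.of_gridDist_le (k := 1) hd (.of_le hp)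

theorem pebbleReachable_of_two_sources {p₁ p₂ m t : Fin r × Fin c} (hne : p₁ ≠ p₂)
    (hp₁ : 4 ≤ D p₁) (hp₂ : 4 ≤ D p₂) (hd₁ : gridDist p₁ m ≤ 2) (hd₂ : gridDist p₂ m ≤ 2)
    (hmt : (fgrid r c).Adj m t) : PebbleReachable (fgrid r c) D t := by
  have h₁ : CanPebble (fgrid r c) (Pi.single p₁ 4) 1 m :=
    .of_gridDist_le hd₁ (.of_le (by simp))
  have h₂ : CanPebble (fgrid r c) (Pi.single p₂ 4) 1 m :=
    .of_gridDist_le hd₂ (.of_le (by simp))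
  have hle : Pi.single p₁ 4 + Pi.single p₂ 4 ≤ D := by
    intro v
    by_cases h₁ : v = p₁ <;> by_cases h₂ : v = p₂ <;> subst_vars <;> simp_all
  exact ((h₁.add h₂).mono hle).of_adj hmt

theorem pebbleReachable_of_lattice
    (hD : ∀ p : Fin r × Fin c, (6 * (p.1 : ℕ) + p.2) % 14 = 0 → 4 ≤ D p)
    {x y : ℕ} (hx : 3 ≤ x ∧ x + 3 < r) (hy : 3 ≤ y ∧ y + 3 < c) :
    PebbleReachable (fgrid r c) D (⟨x, by omega⟩, ⟨y, by omega⟩) := by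
  have near : ∀ u v, u < r ∧ v < c ∧ (6 * u + v) % 14 = 0 ∧
      ((u : ℤ) - x).natAbs + ((v : ℤ) - y).natAbs ≤ 2 →
      PebbleReachable (fgrid r c) D (⟨x, by omega⟩, ⟨y, by omega⟩) :=
    fun u v h => pebbleReachable_of_gridDist_le_two (p := (⟨u, h.1⟩, ⟨v, h.2.1⟩))
      (hD _ h.2.2.1) h.2.2.2
  have merge : ∀ u₁ v₁ u₂ v₂ a b, u₁ < r ∧ v₁ < c ∧ u₂ < r ∧ v₂ < c ∧ a < r ∧ b < c ∧
      (u₁ ≠ u₂ ∨ v₁ ≠ v₂) ∧ (6 * u₁ + v₁) % 14 = 0 ∧ (6 * u₂ + v₂) % 14 = 0 ∧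
      ((u₁ : ℤ) - a).natAbs + ((v₁ : ℤ) - b).natAbs ≤ 2 ∧
      ((u₂ : ℤ) - a).natAbs + ((v₂ : ℤ) - b).natAbs ≤ 2 ∧
      ((a : ℤ) - x).natAbs + ((b : ℤ) - y).natAbs = 1 →
      PebbleReachable (fgrid r c) D (⟨x, by omega⟩, ⟨y, by omega⟩) := by
    intro u₁ v₁ u₂ v₂ a b ⟨hu₁, hv₁, hu₂, hv₂, ha, hb, hne, hl₁, hl₂, hd₁, hd₂, hadj⟩
    refine pebbleReachable_of_two_sources (p₁ := (⟨u₁, hu₁⟩, ⟨v₁, hv₁⟩))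
      (p₂ := (⟨u₂, hu₂⟩, ⟨v₂, hv₂⟩)) (m := (⟨a, ha⟩, ⟨b, hb⟩)) ?_ (hD _ hl₁) (hD _ hl₂) hd₁ hd₂ hadj
    simpa only [ne_eq, Prod.mk.injEq, Fin.mk.injEq, not_and_or] using hne
  have : (6 * x + y) % 14 < 14 := Nat.mod_lt _ (by norm_num)
  interval_cases hres : (6 * x + y) % 14
  · exact near x y (by omega)
  · exact near x (y - 1) (by omega)
  · exact near x (y - 2) (by omega)
  · exact merge (x + 2) (y - 1) x (y - 3) x (y - 1) (by omega)
  · exact merge (x - 1) (y + 2) (x - 3) y (x - 1) y (by omega)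
  · exact near (x - 1) (y + 1) (by omega)
  · exact near (x - 1) y (by omega)
  · exact near (x + 1) (y + 1) (by omega)
  · exact near (x + 1) y (by omega)
  · exact near (x + 1) (y - 1) (by omega)
  · exact merge (x + 3) y (x + 1) (y - 2) (x + 1) y (by omega)
  · exact merge x (y + 3) (x - 2) (y + 1) x (y + 1) (by omega)
  · exact near x (y + 2) (by omega)
  · exact near x (y + 1) (by omega)

end Grid

def latticeDistr (n x y : ℕ) : ℕ :=
  (if x < 3 ∨ n ≤ x + 3 ∨ y < 3 ∨ n ≤ y + 3 then 2 else 0) +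
    if (6 * x + y) % 14 = 0 then 4 else 0

theorem solvableDistr_latticeDistr (n : ℕ) :
    SolvableDistr (fgrid n n) fun p => latticeDistr n p.1 p.2 := by
  rintro ⟨⟨x, hx⟩, ⟨y, hy⟩⟩
  by_cases hframe : x < 3 ∨ n ≤ x + 3 ∨ y < 3 ∨ n ≤ y + 3
  · exact CanPebble.of_le (by simp only [latticeDistr, if_pos hframe]; omega)
  · exact pebbleReachable_of_lattice (fun p hp => by simp [latticeDistr, hp]) (by omega) (by omega)

theorem card_filter_near_boundary_le (n : ℕ) : #{z ∈ range n | z < 3 ∨ n ≤ z + 3} ≤ 6 := by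
  rw [filter_or]
  refine (card_union_le _ _).trans (add_le_add (b := 3) (d := 3) ?_ ?_)
  · calc #{z ∈ range n | z < 3} ≤ #(range 3) :=
          card_le_card fun z hz => by simp only [mem_filter, mem_range] at hz ⊢; omega
      _ = 3 := card_range 3
  · calc #{z ∈ range n | n ≤ z + 3} ≤ #(Ico (n - 3) n) :=
          card_le_card fun z hz => by simp only [mem_filter, mem_range, mem_Ico] at hz ⊢; omega
      _ ≤ 3 := by rw [Nat.card_Ico]; omega

theorem card_filter_lattice_row (M x : ℕ) : #{y ∈ range (14 * M) | (6 * x + y) % 14 = 0} = M := by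
  have := Nat.count_modEq_card (r := 14) (b := 14 * M) (by norm_num) (8 * x)
  rw [Nat.count_eq_card_filter_range] at this
  have hrow : {y ∈ range (14 * M) | (6 * x + y) % 14 = 0} =
      {y ∈ range (14 * M) | y ≡ 8 * x [MOD 14]} :=
    filter_congr fun y _ => by unfold Nat.ModEq; omega
  simpa [hrow] using this

theorem sum_fin_prod_eq_sum_range {β : Type*} [AddCommMonoid β] (n : ℕ) (f : ℕ → ℕ → β) :
    ∑ p : Fin n × Fin n, f p.1 p.2 = ∑ x ∈ range n, ∑ y ∈ range n, f x y := by
  rw [Fintype.sum_prod_type]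
  simp only [Finset.sum_range]

theorem sum_latticeDistr_le (M : ℕ) :
    ∑ p : Fin (14 * M) × Fin (14 * M), latticeDistr (14 * M) p.1 p.2 ≤ 56 * M ^ 2 + 336 * M := by
  have hpt : ∀ x y, latticeDistr (14 * M) x y ≤ (if x < 3 ∨ 14 * M ≤ x + 3 then 2 else 0) +
      (if y < 3 ∨ 14 * M ≤ y + 3 then 2 else 0) + if (6 * x + y) % 14 = 0 then 4 else 0 := by
    intro x y
    unfold latticeDistr
    split_ifs <;> omega
  have hB := card_filter_near_boundary_le (14 * M)
  calc ∑ p : Fin (14 * M) × Fin (14 * M), latticeDistr (14 * M) p.1 p.2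
      ≤ ∑ x ∈ range (14 * M), ∑ y ∈ range (14 * M), ((if x < 3 ∨ 14 * M ≤ x + 3 then 2 else 0) +
          (if y < 3 ∨ 14 * M ≤ y + 3 then 2 else 0) + if (6 * x + y) % 14 = 0 then 4 else 0) := by
        rw [sum_fin_prod_eq_sum_range]
        exact sum_le_sum fun x _ => sum_le_sum fun y _ => hpt x y
    _ = 14 * M * (#{z ∈ range (14 * M) | z < 3 ∨ 14 * M ≤ z + 3} * 2) * 2 + 14 * M * (M * 4) := by
        simp only [sum_add_distrib, sum_const, card_range, smul_eq_mul, ← mul_sum]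
        simp only [Finset.sum_ite, sum_const_zero, add_zero, sum_const, smul_eq_mul,
          card_filter_lattice_row, card_range]
        ring
    _ ≤ 56 * M ^ 2 + 336 * M := by nlinarith

theorem le_coveringRatio_latticeDistr {M : ℕ} (hM : 0 < M) :
    (7 * M / (2 * (M + 6)) : ℝ) ≤ ((14 * M : ℕ) : ℝ) ^ 2 /
      ∑ p : Fin (14 * M) × Fin (14 * M), (latticeDistr (14 * M) p.1 p.2 : ℝ) := by
  rw [← Nat.cast_sum]
  have hpos : 0 < ∑ p : Fin (14 * M) × Fin (14 * M), latticeDistr (14 * M) p.1 p.2 := by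
    have hcorner : 0 < latticeDistr (14 * M) 0 0 := by simp [latticeDistr]
    exact hcorner.trans_le <| single_le_sum (f := fun p : Fin (14 * M) × Fin (14 * M) =>
      latticeDistr (14 * M) p.1 p.2) (fun _ _ => Nat.zero_le _)
      (mem_univ (⟨0, by omega⟩, ⟨0, by omega⟩))
  have hS : ((∑ p : Fin (14 * M) × Fin (14 * M), latticeDistr (14 * M) p.1 p.2 : ℕ) : ℝ) ≤
      56 * (M : ℝ) ^ 2 + 336 * M := by exact_mod_cast sum_latticeDistr_le M
  have hM' : (0 : ℝ) < M := by exact_mod_cast hM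
  calc (7 * M / (2 * (M + 6)) : ℝ) = ((14 * M : ℕ) : ℝ) ^ 2 / (56 * (M : ℝ) ^ 2 + 336 * M) := by
        push_cast
        field_simp
        ring
    _ ≤ _ := div_le_div_of_nonneg_left (by positivity) (by exact_mod_cast hpos) hS

theorem exists_solvableDistr_fgrid_sub_lt_ratio (ε : ℝ) (hε : 0 < ε) :
    ∃ n : ℕ, ∃ D : Fin n × Fin n → ℕ,
      SolvableDistr (fgrid n n) D ∧ (3.5 - ε : ℝ) < (n : ℝ) ^ 2 / (∑ v, (D v : ℝ)) := by
  obtain ⟨M, hM⟩ := exists_nat_gt (21 / ε)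
  have hM0 : (0 : ℝ) < M := (div_pos (by norm_num) hε).trans hM
  refine ⟨14 * M, fun p => latticeDistr (14 * M) p.1 p.2, solvableDistr_latticeDistr _,
    lt_of_lt_of_le ?_ (le_coveringRatio_latticeDistr (by exact_mod_cast hM0))⟩
  rw [div_lt_iff₀ hε] at hM
  rw [lt_div_iff₀ (by positivity)]
  nlinarith

theorem covering_ratio_exceeds :
    (∀ ε : ℝ, 0 < ε → ∃ n : ℕ, ∃ D : Fin n × Fin n → ℕ,
      SolvableDistr (fgrid n n) D ∧ (3.5 - ε : ℝ) < (n : ℝ) ^ 2 / (∑ v, (D v : ℝ))) ∧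
    ∃ n : ℕ, ∃ D : Fin n × Fin n → ℕ,
      SolvableDistr (fgrid n n) D ∧ (3.25 : ℝ) < (n : ℝ) ^ 2 / (∑ v, (D v : ℝ)) := by
  refine ⟨exists_solvableDistr_fgrid_sub_lt_ratio, ?_⟩
  obtain ⟨n, D, hD, hlt⟩ := exists_solvableDistr_fgrid_sub_lt_ratio (1 / 4) (by norm_num)
  exact ⟨n, D, hD, by norm_num at hlt ⊢; linarith⟩
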